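/- arXiv:0801.0023 — 2 statements merged into one kernel-verified Lean document; each statement's English description precedes it below -/
import Mathlib

section
/- For every s ∈ ℂ with Re s > 1, the completed zeta function satisfies π^{−s/2} · Γ(s/2) · ζ(s) = (1/Γ((s+1)/2)) · ∫_0^1 ((log x)^2 / (4π))^{(s−1)/2} · (1 − x)^{−1} dx, where ((log x)^2/(4π))^{(s−1)/2} denotes the complex power of the positive real (log x)^2/(4π). -/
/-!
Substituting `x = e^{-t}` turns the integral into `(4π)^{(1-s)/2} ∫₀^∞ t^{s-1} / (e^t - 1) dt`.
Expanding `1 / (e^t - 1) = ∑ₙ e^{-(n+1)t}` and integrating termwise gives Abel's formula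
`∫₀^∞ t^{s-1} / (e^t - 1) dt = Γ(s) ζ(s)`, and Legendre's duplication formula
`Γ(s/2) Γ((s+1)/2) = 2^{1-s} √π Γ(s)` rewrites `(4π)^{(1-s)/2} Γ(s)` as
`π^{-s/2} Γ(s/2) Γ((s+1)/2)`.
-/

open MeasureTheory Real Set

lemma exp_neg_mul_inv_one_sub_exp_neg (t : ℝ) :
    rexp (-t) * (1 - rexp (-t))⁻¹ = (rexp t - 1)⁻¹ := by
  rw [show 1 - rexp (-t) = rexp (-t) * (rexp t - 1) by
      rw [mul_sub, ← exp_add, neg_add_cancel, exp_zero, mul_one],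
    mul_inv, ← mul_assoc, mul_inv_cancel₀ (exp_ne_zero _), one_mul]

lemma hasSum_exp_neg_succ_mul {t : ℝ} (ht : 0 < t) :
    HasSum (fun n : ℕ ↦ rexp (-(n + 1) * t)) (rexp t - 1)⁻¹ := by
  have hgeo := (hasSum_geometric_of_lt_one (exp_nonneg (-t))
    (exp_lt_one_iff.mpr (neg_lt_zero.mpr ht))).mul_left (rexp (-t))
  rw [exp_neg_mul_inv_one_sub_exp_neg] at hgeo
  refine hgeo.congr_fun fun n ↦ ?_
  rw [← exp_nat_mul, ← exp_add]
  ring_nf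

theorem mellin_inv_exp_sub_one {s : ℂ} (hs : 1 < s.re) :
    mellin (fun t : ℝ ↦ (((rexp t - 1)⁻¹ : ℝ) : ℂ)) s = Complex.Gamma s * riemannZeta s := by
  have key := hasSum_mellin (F := fun t : ℝ ↦ (((rexp t - 1)⁻¹ : ℝ) : ℂ))
    (a := fun _ : ℕ ↦ (1 : ℂ)) (p := fun n ↦ (n + 1 : ℝ))
    (fun n ↦ Or.inr n.cast_add_one_pos) (zero_lt_one.trans hs) (fun t ht ↦ ?_) ?_
  · rw [← key.tsum_eq, zeta_eq_tsum_one_div_nat_add_one_cpow hs, ← tsum_mul_left]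
    congr 1 with n
    push_cast
    ring
  · simpa using Complex.hasSum_ofReal.mpr (hasSum_exp_neg_succ_mul ht)
  · simpa using (summable_nat_add_iff 1).mpr (Real.summable_one_div_nat_rpow.mpr hs)

lemma integral_Ioo_zero_one_eq_integral_Ioi_exp_neg {E : Type*} [NormedAddCommGroup E]
    [NormedSpace ℝ E] (f : ℝ → E) :
    ∫ x in Ioo 0 1, f x = ∫ t in Ioi 0, rexp (-t) • f (rexp (-t)) := by
  have himage : (fun t ↦ rexp (-t)) '' Ioi 0 = Ioo 0 1 := by
    rw [show (fun t ↦ rexp (-t)) = rexp ∘ Neg.neg from rfl, image_comp, image_neg_Ioi,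
      neg_zero, image_exp_Iio, exp_zero]
  have hderiv (t : ℝ) (_ : t ∈ Ioi 0) :
      HasDerivWithinAt (fun t ↦ rexp (-t)) (-rexp (-t)) (Ioi 0) t := by
    simpa using ((hasDerivAt_neg t).exp).hasDerivWithinAt
  rw [← himage, integral_image_eq_integral_abs_deriv_smul measurableSet_Ioi hderiv
    (exp_injective.comp neg_injective).injOn]
  simp_rw [abs_neg, abs_of_pos (exp_pos _)]

lemma ofReal_sq_div_cpow_half {t c : ℝ} (ht : 0 < t) (hc : 0 < c) (w : ℂ) :
    ((t ^ 2 / c : ℝ) : ℂ) ^ (w / 2) = (c : ℂ) ^ (-w / 2) * (t : ℂ) ^ w := by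
  have htne : (t : ℂ) ≠ 0 := Complex.ofReal_ne_zero.mpr ht.ne'
  rw [show t ^ 2 / c = c⁻¹ * (t * t) by ring, Complex.ofReal_mul,
    Complex.mul_cpow_ofReal_nonneg (by positivity) (by positivity), Complex.ofReal_mul,
    Complex.mul_cpow_ofReal_nonneg ht.le ht.le, ← Complex.cpow_add _ _ htne, add_halves,
    Complex.ofReal_inv, Complex.inv_cpow _ _ (by
      rw [Complex.arg_ofReal_of_nonneg hc.le]; exact pi_ne_zero.symm), ← Complex.cpow_neg,
    neg_div]

theorem integral_log_sq_cpow_mul_inv_one_sub {s : ℂ} (hs : 1 < s.re) :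
    ∫ x in Ioo (0:ℝ) 1, ((log x ^ 2 / (4 * π) : ℝ) : ℂ) ^ ((s - 1) / 2) * (1 - (x : ℂ))⁻¹
      = ((4 * π : ℝ) : ℂ) ^ ((1 - s) / 2) * (Complex.Gamma s * riemannZeta s) := by
  rw [integral_Ioo_zero_one_eq_integral_Ioi_exp_neg, ← mellin_inv_exp_sub_one hs, mellin,
    ← integral_const_mul]
  refine setIntegral_congr_fun measurableSet_Ioi fun t ht ↦ ?_
  have hgeom := congrArg ((↑) : ℝ → ℂ) (exp_neg_mul_inv_one_sub_exp_neg t)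
  simp only [Complex.ofReal_mul, Complex.ofReal_inv, Complex.ofReal_sub, Complex.ofReal_one]
    at hgeom
  rw [log_exp, neg_sq, ofReal_sq_div_cpow_half ht (by positivity), neg_sub]
  simp only [Complex.real_smul, smul_eq_mul, Complex.ofReal_inv, Complex.ofReal_sub,
    Complex.ofReal_one]
  linear_combination (((4 * π : ℝ) : ℂ) ^ ((1 - s) / 2) * (t : ℂ) ^ (s - 1)) * hgeom

lemma pi_cpow_mul_Gamma_half_mul_Gamma_add_one_half (s : ℂ) :
    (π : ℂ) ^ (-s / 2) * Complex.Gamma (s / 2) * Complex.Gamma ((s + 1) / 2) =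
      ((4 * π : ℝ) : ℂ) ^ ((1 - s) / 2) * Complex.Gamma s := by
  have hdup := Complex.Gamma_mul_Gamma_add_half (s / 2)
  rw [show s / 2 + 1 / 2 = (s + 1) / 2 by ring, mul_div_cancel₀ s two_ne_zero] at hdup
  have hsqrt : ((√π : ℝ) : ℂ) = (π : ℂ) ^ (1 / 2 : ℂ) := by
    rw [sqrt_eq_rpow, Complex.ofReal_cpow pi_pos.le]
    norm_num
  have hconst :
      ((4 * π : ℝ) : ℂ) ^ ((1 - s) / 2) = (2 : ℂ) ^ (1 - s) * √π * (π : ℂ) ^ (-s / 2) := by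
    rw [show 4 * π = 2 * 2 * π by ring, Complex.ofReal_mul,
      Complex.mul_cpow_ofReal_nonneg (by norm_num) pi_pos.le, Complex.ofReal_mul,
      Complex.mul_cpow_ofReal_nonneg zero_le_two zero_le_two, Complex.ofReal_ofNat,
      ← Complex.cpow_add _ _ two_ne_zero, add_halves, hsqrt, mul_assoc,
      ← Complex.cpow_add _ _ (Complex.ofReal_ne_zero.mpr pi_ne_zero)]
    congr 2
    ring
  rw [mul_assoc, hdup, hconst]
  ring

theorem stmt_7 (s : ℂ) (hs : 1 < s.re) :
    (Real.pi : ℂ) ^ (-s / 2) * Complex.Gamma (s / 2) * riemannZeta s =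
      (1 / Complex.Gamma ((s + 1) / 2)) *
        ∫ x in Set.Ioo (0:ℝ) 1,
          (((Real.log x) ^ 2 / (4 * Real.pi) : ℝ) : ℂ) ^ ((s - 1) / 2) * (1 - (x : ℂ))⁻¹ := by
  have hΓ : Complex.Gamma ((s + 1) / 2) ≠ 0 :=
    Complex.Gamma_ne_zero_of_re_pos (by
      simp only [Complex.div_ofNat_re, Complex.add_re, Complex.one_re]; linarith)
  rw [integral_log_sq_cpow_mul_inv_one_sub hs, one_div, eq_inv_mul_iff_mul_eq₀ hΓ]
  linear_combination riemannZeta s * pi_cpow_mul_Gamma_half_mul_Gamma_add_one_half s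
end

section
/- Let k ≥ 0 be a real number, let F : ℂ → ℂ be analytic on the open unit disc and on an open neighborhood of 1, with F(0) = 0 and Taylor coefficients a(n) at 0 satisfying |a(n)| ≤ C·n^k for all n ≥ 1, and let w ∈ (0,1). Then there exist a finite set S of positive integers and a function Λ_w : ℂ → ℂ analytic on ℂ ∖ S such that: (i) Λ_w(s) = (1/Γ(s)) · ∫_w^1 (−log t)^{s−1} · F(t) · t^{−1} dt for all s with Re s > k + 1; and (ii) for every natural number n, Λ_w(−n) = (D^n F)(1), where D is the operator (D f)(t) = t · f′(t). In particular the values of the analytic continuation at the negative integers are independent of w. -/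
/-!
Substituting `t = exp (-u)` turns the integral into `∫₀ᴸ u ^ (s - 1) g(u) du` with
`g(u) = F(exp (-u))` and `L = -log w`, and `g` is analytic near `[0, L]`. Integrating by parts
`N` times writes `Γ(s)⁻¹` times this integral as a sum of entire functions plus
`Γ(s + N)⁻¹ ∫₀ᴸ u ^ (s + N - 1) g⁽ᴺ⁾(u) du`, which is holomorphic for `re s > -N`; so the
continuation is entire. At `s = -n` every boundary term but the `n`-th is killed by a pole of `Γ`,
and what is left is `(-1)ⁿ g⁽ⁿ⁾(0) = (Dⁿ F)(1)` by the chain rule.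
-/

open MeasureTheory Set Filter Complex Topology

noncomputable def truncMellin (L : ℝ) (f : ℝ → ℂ) (s : ℂ) : ℂ :=
  ∫ u in Ioo 0 L, (u : ℂ) ^ (s - 1) * f u

namespace truncMellin

variable {L : ℝ} {f f' : ℝ → ℂ}

theorem eq_mellin_indicator :
    truncMellin L f = mellin ((Ioo 0 L).indicator f) := by
  ext s
  rw [truncMellin, mellin, ← integral_indicator measurableSet_Ioi,
    ← integral_indicator measurableSet_Ioo]
  congr 1 with u
  by_cases hu : u ∈ Ioo 0 L
  · simp [hu, hu.1]
  · by_cases hu0 : u ∈ Ioi 0 <;> simp [hu, hu0]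

theorem differentiableAt (hL : 0 < L) (hf : ContinuousOn f (Icc 0 L)) {s : ℂ}
    (hs : 0 < s.re) :
    DifferentiableAt ℂ (truncMellin L f) s := by
  rw [eq_mellin_indicator]
  have hIoo : Ioo 0 L ∈ 𝓝[>] (0 : ℝ) := Ioo_mem_nhdsGT hL
  refine mellin_differentiableAt_of_isBigO_rpow (a := s.re + 1) (b := 0) ?_ ?_ (by linarith) ?_ hs
  · exact ((integrable_indicator_iff measurableSet_Ioo).2
      (hf.integrableOn_Icc.mono_set Ioo_subset_Icc_self)).locallyIntegrable.locallyIntegrableOn _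
  · refine (EventuallyEq.isBigO ?_).trans (Asymptotics.isBigO_zero _ _)
    filter_upwards [eventually_ge_atTop L] with t ht
    exact indicator_of_notMem (fun h => (not_lt.2 ht) h.2) f
  · have hlim : Tendsto ((Ioo 0 L).indicator f) (𝓝[>] 0) (𝓝 (f 0)) :=
      ((hf 0 ⟨le_rfl, hL.le⟩).mono_of_mem_nhdsWithin
        (mem_of_superset hIoo Ioo_subset_Icc_self)).tendsto.congr'
        (eventually_of_mem hIoo fun t ht => (indicator_of_mem ht f).symm)
    simpa only [neg_zero, Real.rpow_zero] using hlim.isBigO_one ℝ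

theorem mul_add_deriv_eq (hL : 0 < L) (hf : ContinuousOn f (Icc 0 L))
    (hf' : ContinuousOn f' (Icc 0 L)) (hd : ∀ u ∈ Ioo 0 L, HasDerivAt f (f' u) u)
    {s : ℂ} (hs : 0 < s.re) :
    s * truncMellin L f s + truncMellin L f' (s + 1) = (L : ℂ) ^ s * f L := by
  have hs0 : s ≠ 0 := fun h => by simp [h] at hs
  have hpow : ContinuousOn (fun u : ℝ => (u : ℂ) ^ s) (Icc 0 L) :=
    (continuous_ofReal_cpow_const hs).continuousOn
  have hi1 : IntervalIntegrable (fun u : ℝ => s * ((u : ℂ) ^ (s - 1) * f u)) volume 0 L := by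
    refine (IntervalIntegrable.mul_continuousOn ?_ (by rwa [uIcc_of_le hL.le])).const_mul s
    exact intervalIntegral.intervalIntegrable_cpow' (by simp; linarith)
  have hi2 : IntervalIntegrable (fun u : ℝ => (u : ℂ) ^ s * f' u) volume 0 L :=
    (hpow.mul hf').intervalIntegrable_of_Icc hL.le
  have hderiv : ∀ u ∈ Ioo 0 L, HasDerivAt (fun u : ℝ => (u : ℂ) ^ s * f u)
      (s * ((u : ℂ) ^ (s - 1) * f u) + (u : ℂ) ^ s * f' u) u := by
    intro u hu
    have hcpow : HasDerivAt (fun u : ℝ => (u : ℂ) ^ s) (s * (u : ℂ) ^ (s - 1)) u := by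
      simpa using ((hasDerivAt_id (u : ℂ)).cpow_const (ofReal_mem_slitPlane.2 hu.1)).comp_ofReal
    exact (hcpow.mul (hd u hu)).congr_deriv (by ring)
  have hftc := intervalIntegral.integral_eq_sub_of_hasDerivAt_of_le hL.le (hpow.mul hf) hderiv
    (hi1.add hi2)
  rw [Pi.mul_apply, Pi.mul_apply, ofReal_zero, zero_cpow hs0, zero_mul, sub_zero,
    intervalIntegral.integral_add hi1 hi2, intervalIntegral.integral_const_mul,
    intervalIntegral.integral_of_le hL.le, intervalIntegral.integral_of_le hL.le,
    integral_Ioc_eq_integral_Ioo,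
    integral_Ioc_eq_integral_Ioo] at hftc
  simpa [truncMellin] using hftc

theorem one_eq_sub (hL : 0 < L) (hf : ContinuousOn f (Icc 0 L)) (hf' : ContinuousOn f' (Icc 0 L))
    (hd : ∀ u ∈ Ioo 0 L, HasDerivAt f (f' u) u) :
    truncMellin L f' 1 = f L - f 0 := by
  rw [← intervalIntegral.integral_eq_sub_of_hasDerivAt_of_le hL.le hf hd
    (hf'.intervalIntegrable_of_Icc hL.le), intervalIntegral.integral_of_le hL.le,
    integral_Ioc_eq_integral_Ioo]
  simp [truncMellin]

end truncMellin

structure HasDerivSeqOn (L : ℝ) (h : ℕ → ℝ → ℂ) : Prop where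
  continuousOn : ∀ j, ContinuousOn (h j) (Icc 0 L)
  hasDerivAt : ∀ j, ∀ u ∈ Ioo 0 L, HasDerivAt (h j) (h (j + 1) u) u

/-- The result of integrating `(Gamma s)⁻¹ * truncMellin L (h 0) s` by parts `N` times when
`h (j + 1)` is the derivative of `h j`; the remaining integral converges for `-N < re s`. -/
noncomputable def partialContinuation (L : ℝ) (h : ℕ → ℝ → ℂ) (N : ℕ) (s : ℂ) : ℂ :=
  ∑ j ∈ Finset.range N, (-1) ^ j * (L : ℂ) ^ (s + j) * h j L * (Gamma (s + j + 1))⁻¹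
    + (-1) ^ N * truncMellin L (h N) (s + N) * (Gamma (s + N))⁻¹

noncomputable def truncMellinContinuation (L : ℝ) (h : ℕ → ℝ → ℂ) (s : ℂ) : ℂ :=
  partialContinuation L h (⌊-s.re⌋₊ + 1) s

section Continuation

variable {L : ℝ} {h : ℕ → ℝ → ℂ}

theorem partialContinuation_succ (hL : 0 < L) (hh : HasDerivSeqOn L h) {N : ℕ} {s : ℂ}
    (hs : -(N : ℝ) < s.re) :
    partialContinuation L h (N + 1) s = partialContinuation L h N s := by
  have hsN : 0 < (s + N).re := by simp; linarith
  have hibp := truncMellin.mul_add_deriv_eq hL (hh.continuousOn N) (hh.continuousOn (N + 1))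
    (hh.hasDerivAt N) hsN
  have hsN0 : s + N ≠ 0 := fun h0 => by simp [h0] at hsN
  have hΓ : Gamma (s + N + 1) = (s + N) * Gamma (s + N) := Gamma_add_one _ hsN0
  have hΓ0 : Gamma (s + N) ≠ 0 := Gamma_ne_zero_of_re_pos hsN
  simp only [partialContinuation, Finset.sum_range_succ, Nat.cast_succ, ← add_assoc]
  rw [hΓ, eq_sub_of_add_eq' hibp]
  field_simp
  ring

theorem partialContinuation_eq_of_le (hL : 0 < L) (hh : HasDerivSeqOn L h) {M N : ℕ}
    (hMN : M ≤ N) {s : ℂ} (hs : -(M : ℝ) < s.re) :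
    partialContinuation L h N s = partialContinuation L h M s := by
  induction N, hMN using Nat.le_induction with
  | base => rfl
  | succ N hMN ih =>
    have : (M : ℝ) ≤ N := by exact_mod_cast hMN
    rw [partialContinuation_succ hL hh (by linarith), ih]

theorem partialContinuation_eq (hL : 0 < L) (hh : HasDerivSeqOn L h) {M N : ℕ} {s : ℂ}
    (hM : -(M : ℝ) < s.re) (hN : -(N : ℝ) < s.re) :
    partialContinuation L h M s = partialContinuation L h N s := by
  rcases le_total M N with hMN | hNM
  · exact (partialContinuation_eq_of_le hL hh hMN hM).symm
  · exact partialContinuation_eq_of_le hL hh hNM hN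

theorem differentiableOn_partialContinuation (hL : 0 < L) {N : ℕ}
    (hc : ContinuousOn (h N) (Icc 0 L)) :
    DifferentiableOn ℂ (partialContinuation L h N) {s | -(N : ℝ) < s.re} := by
  intro s hs
  have hM : DifferentiableAt ℂ (fun s => truncMellin L (h N) (s + N)) s :=
    (truncMellin.differentiableAt hL hc (by simp; linarith [hs.out])).comp s
      (differentiableAt_id.add_const _)
  have hΓ (a : ℂ) : Differentiable ℂ fun s : ℂ => (Gamma (s + a))⁻¹ :=
    differentiable_one_div_Gamma.comp (differentiable_id.add_const a)
  have hL0 : (L : ℂ) ≠ 0 := by exact_mod_cast hL.ne'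
  refine (DifferentiableAt.add (DifferentiableAt.fun_sum fun j _ => ?_)
    (((differentiableAt_const _).mul hM).mul (hΓ _ s))).differentiableWithinAt
  have hpow := (differentiable_id.add_const (j : ℂ)).const_cpow (Or.inl hL0) s
  simp only [add_assoc]
  exact (((differentiableAt_const _).mul hpow).mul (differentiableAt_const _)).mul (hΓ _ s)

theorem neg_natFloor_add_one_lt_re (s : ℂ) : -((⌊-s.re⌋₊ + 1 : ℕ) : ℝ) < s.re := by
  have := Nat.lt_floor_add_one (-s.re)
  push_cast
  linarith

theorem truncMellinContinuation_eq (hL : 0 < L) (hh : HasDerivSeqOn L h) {N : ℕ} {s : ℂ}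
    (hs : -(N : ℝ) < s.re) :
    truncMellinContinuation L h s = partialContinuation L h N s :=
  partialContinuation_eq hL hh (neg_natFloor_add_one_lt_re s) hs

theorem analyticAt_truncMellinContinuation (hL : 0 < L) (hh : HasDerivSeqOn L h) (s : ℂ) :
    AnalyticAt ℂ (truncMellinContinuation L h) s := by
  set N := ⌊-s.re⌋₊ + 1
  have hU : {z : ℂ | -(N : ℝ) < z.re} ∈ 𝓝 s :=
    (isOpen_lt continuous_const continuous_re).mem_nhds (neg_natFloor_add_one_lt_re s)
  refine ((differentiableOn_partialContinuation hL (hh.continuousOn N)).analyticAt hU).congr ?_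
  filter_upwards [hU] with z hz
  exact (truncMellinContinuation_eq hL hh hz).symm

theorem truncMellinContinuation_of_re_pos (hL : 0 < L) (hh : HasDerivSeqOn L h) {s : ℂ}
    (hs : 0 < s.re) :
    truncMellinContinuation L h s = (Gamma s)⁻¹ * truncMellin L (h 0) s := by
  rw [truncMellinContinuation_eq hL hh (N := 0) (by simpa using hs)]
  simp [partialContinuation, mul_comm]

theorem truncMellinContinuation_neg_nat (hL : 0 < L) (hh : HasDerivSeqOn L h) (n : ℕ) :
    truncMellinContinuation L h (-n) = (-1) ^ n * h n 0 := by
  have hvanish : ∀ j ∈ Finset.range n, Gamma (-n + j + 1) = 0 := by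
    intro j hj
    have : -(n : ℂ) + j + 1 = -((n - j - 1 : ℕ) : ℂ) := by
      have := Finset.mem_range.mp hj
      push_cast [Nat.cast_sub (by omega : j ≤ n), Nat.cast_sub (by omega : 1 ≤ n - j)]
      ring
    rw [this, Gamma_neg_nat_eq_zero]
  rw [truncMellinContinuation_eq hL hh (N := n + 1) (by simp)]
  simp only [partialContinuation, Finset.sum_range_succ]
  rw [Finset.sum_eq_zero fun j hj => by rw [hvanish j hj, inv_zero, mul_zero]]
  simp only [neg_add_cancel, Nat.cast_succ, neg_add_cancel_left, cpow_zero, zero_add, Gamma_one,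
    inv_one, mul_one, truncMellin.one_eq_sub hL (hh.continuousOn n) (hh.continuousOn (n + 1))
      (hh.hasDerivAt n)]
  ring

end Continuation

theorem hasDerivSeqOn_iteratedDeriv {L : ℝ} {g : ℂ → ℂ}
    (hg : ∀ u ∈ Icc 0 L, AnalyticAt ℂ g u) :
    HasDerivSeqOn L fun j u => iteratedDeriv j g u := by
  have hA (j : ℕ) (u : ℝ) (hu : u ∈ Icc 0 L) : AnalyticAt ℂ (iteratedDeriv j g) u := by
    rw [iteratedDeriv_eq_iterate]
    exact (hg u hu).iterated_deriv j
  refine ⟨fun j u hu => ?_, fun j u hu => ?_⟩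
  · exact ((hA j u hu).continuousAt.comp continuous_ofReal.continuousAt).continuousWithinAt
  · rw [iteratedDeriv_succ]
    exact (hA j u (Ioo_subset_Icc_self hu)).differentiableAt.hasDerivAt.comp_ofReal

noncomputable def eulerOp (f : ℂ → ℂ) : ℂ → ℂ := fun t => t * deriv f t

theorem AnalyticAt.iterate_eulerOp {F : ℂ → ℂ} {z : ℂ} (hF : AnalyticAt ℂ F z) (n : ℕ) :
    AnalyticAt ℂ (eulerOp^[n] F) z := by
  induction n with
  | zero => exact hF
  | succ n ih => rw [Function.iterate_succ_apply']; exact analyticAt_id.mul ih.deriv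

theorem iteratedDeriv_comp_cexp {F : ℂ → ℂ} (n : ℕ) {z : ℂ} (hF : AnalyticAt ℂ F (cexp z)) :
    iteratedDeriv n (fun z => F (cexp z)) z = (eulerOp^[n] F) (cexp z) := by
  induction n generalizing z with
  | zero => rfl
  | succ n ih =>
    have hU : {z | AnalyticAt ℂ F (cexp z)} ∈ 𝓝 z :=
      ((isOpen_analyticAt ℂ F).preimage continuous_exp).mem_nhds hF
    have hderiv : HasDerivAt (fun z => (eulerOp^[n] F) (cexp z))
        (deriv (eulerOp^[n] F) (cexp z) * cexp z) z :=
      (hF.iterate_eulerOp n).differentiableAt.hasDerivAt.comp z (hasDerivAt_exp z)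
    rw [iteratedDeriv_succ, Filter.EventuallyEq.deriv_eq (eventually_of_mem hU fun _ => ih),
      Function.iterate_succ_apply', eulerOp, hderiv.deriv, mul_comm]

theorem setIntegral_Ioo_eq_exp_neg {w : ℝ} (hw : 0 < w) (f : ℝ → ℂ) :
    ∫ t in Ioo w 1, f t = ∫ u in Ioo 0 (-Real.log w), Real.exp (-u) • f (Real.exp (-u)) := by
  have himage : (fun u => Real.exp (-u)) '' Ioo 0 (-Real.log w) = Ioo w 1 := by
    rw [← image_image Real.exp Neg.neg]
    simp [Real.exp_log hw]
  have hderiv : ∀ u ∈ Ioo 0 (-Real.log w),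
      HasDerivWithinAt (fun u => Real.exp (-u)) (-Real.exp (-u)) (Ioo 0 (-Real.log w)) u :=
    fun u _ => by simpa using ((hasDerivAt_neg u).exp).hasDerivWithinAt
  have hinj : InjOn (fun u => Real.exp (-u)) (Ioo 0 (-Real.log w)) :=
    fun a _ b _ hab => neg_injective (Real.exp_injective hab)
  rw [← himage, integral_image_eq_integral_abs_deriv_smul measurableSet_Ioo hderiv hinj]
  simp [abs_of_pos (Real.exp_pos _)]

theorem setIntegral_Ioo_neg_log_cpow_eq_truncMellin {w : ℝ} (hw : 0 < w) (f : ℝ → ℂ) (s : ℂ) :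
    ∫ t in Ioo w 1, ((-Real.log t : ℝ) : ℂ) ^ (s - 1) * f t * (t : ℂ)⁻¹ =
      truncMellin (-Real.log w) (fun u => f (Real.exp (-u))) s := by
  rw [setIntegral_Ioo_eq_exp_neg hw, truncMellin]
  refine setIntegral_congr_fun measurableSet_Ioo fun u _ => ?_
  have : (Real.exp (-u) : ℂ) ≠ 0 := by exact_mod_cast (Real.exp_pos _).ne'
  simp only [Real.log_exp, neg_neg, real_smul]
  field_simp

theorem stmt_14_general (k : ℝ) (hk : 0 ≤ k) (F : ℂ → ℂ)
    (hF_disc : ∀ z ∈ Metric.ball (0 : ℂ) 1, AnalyticAt ℂ F z)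
    (hF_one : AnalyticAt ℂ F 1)
    (w : ℝ) (hw : w ∈ Set.Ioo (0:ℝ) 1) :
    ∃ S : Finset ℕ, (∀ m ∈ S, 1 ≤ m) ∧
      ∃ Λ : ℂ → ℂ,
        (∀ s : ℂ, (∀ m ∈ S, s ≠ (m : ℂ)) → AnalyticAt ℂ Λ s) ∧
        (∀ s : ℂ, k + 1 < s.re →
          Λ s = (1 / Complex.Gamma s) *
            ∫ t in Set.Ioo w 1,
              ((-Real.log t : ℝ) : ℂ) ^ (s - 1) * F (t : ℂ) * (t : ℂ)⁻¹) ∧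
        (∀ n : ℕ, Λ (-(n : ℂ)) = ((fun f : ℂ → ℂ => fun t => t * deriv f t)^[n] F) 1) := by
  obtain ⟨hw0, hw1⟩ := hw
  have hL : 0 < -Real.log w := neg_pos.2 (Real.log_neg hw0 hw1)
  have hFexp (u : ℝ) (hu : 0 ≤ u) : AnalyticAt ℂ F (cexp (-u)) := by
    rcases hu.eq_or_lt with rfl | hu
    · simpa using hF_one
    · refine hF_disc _ ?_
      rw [mem_ball_zero_iff, norm_exp]
      simpa using hu
  have hh : HasDerivSeqOn (-Real.log w) fun j u => iteratedDeriv j (fun z => F (cexp (-z))) u :=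
    hasDerivSeqOn_iteratedDeriv fun u hu =>
      (hFexp u hu.1).comp_of_eq (f := fun z => cexp (-z)) (by fun_prop) rfl
  refine ⟨∅, by simp, truncMellinContinuation _ _,
    fun s _ => analyticAt_truncMellinContinuation hL hh s, fun s hs => ?_, fun n => ?_⟩
  · rw [truncMellinContinuation_of_re_pos hL hh (by linarith), one_div,
      setIntegral_Ioo_neg_log_cpow_eq_truncMellin hw0]
    simp [ofReal_exp]
  · change _ = (eulerOp^[n] F) 1
    rw [truncMellinContinuation_neg_nat hL hh, ofReal_zero,
      iteratedDeriv_comp_neg n (fun z => F (cexp z)),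
      iteratedDeriv_comp_cexp n (by simpa using hF_one)]
    simp [← mul_assoc, ← mul_pow]

theorem stmt_14 (k : ℝ) (hk : 0 ≤ k) (F : ℂ → ℂ)
    (hF_disc : ∀ z ∈ Metric.ball (0 : ℂ) 1, AnalyticAt ℂ F z)
    (hF_one : AnalyticAt ℂ F 1) (hF0 : F 0 = 0)
    (C : ℝ) (hC : 0 < C)
    (ha : ∀ n : ℕ, 1 ≤ n → ‖iteratedDeriv n F 0 / (n.factorial : ℂ)‖ ≤ C * (n : ℝ) ^ k)
    (w : ℝ) (hw : w ∈ Set.Ioo (0:ℝ) 1) :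
    ∃ S : Finset ℕ, (∀ m ∈ S, 1 ≤ m) ∧
      ∃ Λ : ℂ → ℂ,
        (∀ s : ℂ, (∀ m ∈ S, s ≠ (m : ℂ)) → AnalyticAt ℂ Λ s) ∧
        (∀ s : ℂ, k + 1 < s.re →
          Λ s = (1 / Complex.Gamma s) *
            ∫ t in Set.Ioo w 1,
              ((-Real.log t : ℝ) : ℂ) ^ (s - 1) * F (t : ℂ) * (t : ℂ)⁻¹) ∧
        (∀ n : ℕ, Λ (-(n : ℂ)) = ((fun f : ℂ → ℂ => fun t => t * deriv f t)^[n] F) 1) :=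
  stmt_14_general k hk F hF_disc hF_one w hw
end
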